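/- arXiv:2205.11046 — 4 statements merged into one kernel-verified Lean document; each statement's English description precedes it below -/
import Mathlib

section
/- Let λ ∈ ℂ \ {0} and * ∈ {p, m}. The two eigenvalues of the transfer matrix T_* have equal absolute value if and only if λ + λ⁻¹ is a real number and (λ + λ⁻¹ − 2 p a_* cosh(2γ))² − 4 |b_* q|² ≤ 0 (this quantity being real under the first condition). Consequently, λ ∉ Λ if and only if these two conditions hold for some * ∈ {p, m}. -/
noncomputable section
open Complex Matrix

/-- The transfer matrix `T_*` for parameters `(a_*, b_*) = (aS, bS)`. -/
def Tmat (γ p aS : ℝ) (q bS lam : ℂ) : Matrix (Fin 2) (Fin 2) ℂ :=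
  (1 / (bS * q * lam)) •
    !![lam ^ 2 - 2 * (aS : ℂ) * (p : ℂ) * (Real.cosh (2 * γ) : ℂ) * lam + (aS : ℂ) ^ 2,
        -(starRingEnd ℂ) bS * ((p : ℂ) * lam - (aS : ℂ) * (Real.exp (2 * γ) : ℂ));
      -(bS * ((p : ℂ) * lam - (aS : ℂ) * (Real.exp (-(2 * γ)) : ℂ))),
        (‖bS‖ : ℂ) ^ 2]

/-- `z₁, z₂` are the two eigenvalues (roots of the characteristic polynomial) of `A`,
counted with multiplicity. -/
def IsEigPair (A : Matrix (Fin 2) (Fin 2) ℂ) (z₁ z₂ : ℂ) : Prop :=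
  A.charpoly = (Polynomial.X - Polynomial.C z₁) * (Polynomial.X - Polynomial.C z₂)

/-- The set `Λ` of nonzero `λ` such that for each `* ∈ {p, m}` the two eigenvalues of `T_*`
have distinct absolute values. -/
def LamSet (γ p aP aM : ℝ) (q bP bM : ℂ) : Set ℂ :=
  {lam | lam ≠ 0 ∧
    (∃ z₁ z₂ : ℂ, IsEigPair (Tmat γ p aP q bP lam) z₁ z₂ ∧ ‖z₁‖ ≠ ‖z₂‖) ∧
    (∃ z₁ z₂ : ℂ, IsEigPair (Tmat γ p aM q bM lam) z₁ z₂ ∧ ‖z₁‖ ≠ ‖z₂‖)}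

/-!
Put `w = b_* q` and `c = 2 p a_* cosh (2γ)`. Using `a_*² + |b_*|² = 1` and `p² + |q|² = 1` one
computes `w · tr T_* = λ + λ⁻¹ - c` and `w² · det T_* = |w|²`, so the rescaled eigenvalues
`u_i = w z_i` are the roots of `X² - (λ + λ⁻¹ - c) X + |w|²`. Two complex numbers with product
`ρ² ≥ 0` have equal modulus iff they are complex conjugate, and a pair with product `ρ²` is
conjugate iff its sum `s` is real with `s² ≤ 4ρ²`: the roots of `X² - s X + ρ²` are
`(s ± i √(4ρ² - s²)) / 2`.
-/

open ComplexConjugate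

lemma Complex.eq_conj_of_mul_eq_sq_of_norm_eq {u₁ u₂ : ℂ} {ρ : ℝ} (h : u₁ * u₂ = ρ ^ 2)
    (hnorm : ‖u₁‖ = ‖u₂‖) : u₂ = conj u₁ := by
  have hρ : ‖u₁‖ ^ 2 = ρ ^ 2 := by simpa [sq, ← hnorm] using congrArg norm h
  rcases eq_or_ne u₁ 0 with rfl | hu₁
  · rw [norm_zero, eq_comm, norm_eq_zero] at hnorm
    simp [hnorm]
  · apply mul_left_cancel₀ hu₁
    rw [h, Complex.mul_conj']
    exact_mod_cast hρ.symm

lemma Complex.eq_conj_iff_of_mul_eq_sq {u₁ u₂ : ℂ} {ρ : ℝ} (h : u₁ * u₂ = ρ ^ 2) :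
    u₂ = conj u₁ ↔ ∃ r : ℝ, u₁ + u₂ = r ∧ r ^ 2 ≤ 4 * ρ ^ 2 := by
  constructor
  · rintro rfl
    refine ⟨2 * u₁.re, Complex.add_conj u₁, ?_⟩
    have hρ : ρ ^ 2 = Complex.normSq u₁ := by
      exact_mod_cast h.symm.trans (Complex.mul_conj u₁)
    nlinarith [Complex.re_sq_le_normSq u₁]
  · rintro ⟨r, hsum, hr⟩
    set δ := √(4 * ρ ^ 2 - r ^ 2)
    have hδ : (δ : ℂ) ^ 2 = 4 * ρ ^ 2 - r ^ 2 := by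
      exact_mod_cast Real.sq_sqrt (by linarith)
    have hdisc : discrim 1 (-(r : ℂ)) (ρ ^ 2) = (δ * I) * (δ * I) := by
      rw [discrim]; linear_combination (-(δ : ℂ) ^ 2) * Complex.I_sq + hδ
    have hroot : 1 * (u₁ * u₁) + -(r : ℂ) * u₁ + ρ ^ 2 = 0 := by
      linear_combination u₁ * hsum - h
    have hu₂ : u₂ = r - u₁ := by linear_combination hsum
    rcases (quadratic_eq_zero_iff one_ne_zero hdisc u₁).1 hroot with rfl | rfl <;>
      · rw [hu₂]; apply Complex.ext <;> simp [map_ofNat] <;> ring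

lemma Complex.norm_eq_norm_iff_of_mul_eq_sq {u₁ u₂ : ℂ} {ρ : ℝ} (h : u₁ * u₂ = ρ ^ 2) :
    ‖u₁‖ = ‖u₂‖ ↔ ∃ r : ℝ, u₁ + u₂ = r ∧ r ^ 2 ≤ 4 * ρ ^ 2 := by
  refine ⟨fun hnorm ↦ (eq_conj_iff_of_mul_eq_sq h).1 (eq_conj_of_mul_eq_sq_of_norm_eq h hnorm),
    fun hr ↦ ?_⟩
  rw [(eq_conj_iff_of_mul_eq_sq h).2 hr, norm_conj]

lemma isEigPair_iff {A : Matrix (Fin 2) (Fin 2) ℂ} {z₁ z₂ : ℂ} :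
    IsEigPair A z₁ z₂ ↔ z₁ + z₂ = A.trace ∧ z₁ * z₂ = A.det := by
  rw [IsEigPair, Matrix.charpoly_fin_two]
  constructor
  · intro h
    have h₀ := congrArg (Polynomial.eval 0) h
    have h₁ := congrArg (Polynomial.eval 1) h
    simp only [Polynomial.eval_add, Polynomial.eval_sub, Polynomial.eval_mul, Polynomial.eval_pow,
      Polynomial.eval_X, Polynomial.eval_C] at h₀ h₁
    exact ⟨by linear_combination h₁ - h₀, by linear_combination -h₀⟩
  · rintro ⟨hsum, hprod⟩
    rw [← hsum, ← hprod, Polynomial.C_add, Polynomial.C_mul]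
    ring

lemma exists_isEigPair (A : Matrix (Fin 2) (Fin 2) ℂ) : ∃ z₁ z₂, IsEigPair A z₁ z₂ := by
  obtain ⟨z, hz⟩ := exists_quadratic_eq_zero (a := 1) (b := -A.trace) (c := A.det) one_ne_zero
    (IsAlgClosed.exists_eq_mul_self _)
  exact ⟨z, A.trace - z, isEigPair_iff.2 ⟨by ring, by linear_combination -hz⟩⟩

lemma IsEigPair.norm_eq_norm_iff {A : Matrix (Fin 2) (Fin 2) ℂ} {z₁ z₂ u₁ u₂ : ℂ}
    (hz : IsEigPair A z₁ z₂) (hu : IsEigPair A u₁ u₂) : ‖z₁‖ = ‖z₂‖ ↔ ‖u₁‖ = ‖u₂‖ := by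
  obtain ⟨hzs, hzp⟩ := isEigPair_iff.1 hz
  obtain ⟨hus, hup⟩ := isEigPair_iff.1 hu
  have hroot : (z₁ - u₁) * (z₁ - u₂) = 0 := by
    linear_combination z₁ * (hzs - hus) - (hzp - hup)
  rcases mul_eq_zero.1 hroot with h | h
  · obtain rfl : z₁ = u₁ := sub_eq_zero.1 h
    obtain rfl : z₂ = u₂ := by linear_combination hzs - hus
    rfl
  · obtain rfl : z₁ = u₂ := sub_eq_zero.1 h
    obtain rfl : z₂ = u₁ := by linear_combination hzs - hus
    exact eq_comm

lemma exists_isEigPair_norm_ne_iff (A : Matrix (Fin 2) (Fin 2) ℂ) :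
    (∃ z₁ z₂, IsEigPair A z₁ z₂ ∧ ‖z₁‖ ≠ ‖z₂‖) ↔ ¬∃ z₁ z₂, IsEigPair A z₁ z₂ ∧ ‖z₁‖ = ‖z₂‖ := by
  constructor
  · rintro ⟨z₁, z₂, hz, hne⟩ ⟨u₁, u₂, hu, heq⟩
    exact hne ((hz.norm_eq_norm_iff hu).2 heq)
  · intro hne
    obtain ⟨z₁, z₂, hz⟩ := exists_isEigPair A
    exact ⟨z₁, z₂, hz, fun heq ↦ hne ⟨z₁, z₂, hz, heq⟩⟩

section Tmat

variable {γ p aS : ℝ} {q bS lam : ℂ}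

lemma mul_trace_Tmat (hb : aS ^ 2 + ‖bS‖ ^ 2 = 1) (hw : bS * q ≠ 0) (hlam : lam ≠ 0) :
    bS * q * (Tmat γ p aS q bS lam).trace =
      lam + lam⁻¹ - (2 * p * aS * Real.cosh (2 * γ) : ℝ) := by
  have hb' : (aS : ℂ) ^ 2 + (‖bS‖ : ℂ) ^ 2 = 1 := by exact_mod_cast hb
  obtain ⟨hb0, hq0⟩ := mul_ne_zero_iff.1 hw
  rw [Matrix.trace_fin_two, Tmat]
  simp only [Matrix.smul_apply, Matrix.of_apply, Matrix.cons_val', Matrix.cons_val_zero,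
    Matrix.cons_val_one, Matrix.empty_val', Matrix.cons_val_fin_one, smul_eq_mul,
    Complex.ofReal_mul, Complex.ofReal_ofNat]
  field_simp
  linear_combination hb'

lemma sq_mul_det_Tmat (hq : p ^ 2 + ‖q‖ ^ 2 = 1) (hlam : lam ≠ 0) :
    (bS * q) ^ 2 * (Tmat γ p aS q bS lam).det = (‖bS * q‖ : ℂ) ^ 2 := by
  have hq' : (p : ℂ) ^ 2 + (‖q‖ : ℂ) ^ 2 = 1 := by exact_mod_cast hq
  have hbb : bS * conj bS = (‖bS‖ : ℂ) ^ 2 := Complex.mul_conj' bS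
  have hexp : (Real.exp (2 * γ) : ℂ) * (Real.exp (-(2 * γ)) : ℂ) = 1 := by
    rw [← Complex.ofReal_mul, ← Real.exp_add]; simp
  have hcosh :
      (Real.exp (2 * γ) : ℂ) + (Real.exp (-(2 * γ)) : ℂ) = 2 * (Real.cosh (2 * γ) : ℂ) := by
    rw [Real.cosh_eq]; push_cast; ring
  rcases eq_or_ne (bS * q) 0 with hw | hw
  · simp [hw]
  obtain ⟨hb0, hq0⟩ := mul_ne_zero_iff.1 hw
  rw [Tmat, Matrix.det_smul, Matrix.det_fin_two_of, Fintype.card_fin, norm_mul,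
    Complex.ofReal_mul]
  field_simp
  linear_combination (-((p : ℂ) * lam - aS * Real.exp (2 * γ)) *
      ((p : ℂ) * lam - aS * Real.exp (-(2 * γ)))) * hbb - (‖bS‖ : ℂ) ^ 2 * lam ^ 2 * hq' +
    (‖bS‖ : ℂ) ^ 2 * aS * p * lam * hcosh - (‖bS‖ : ℂ) ^ 2 * aS ^ 2 * hexp

lemma IsEigPair.norm_eq_norm_iff_of_Tmat {z₁ z₂ : ℂ} (hq : p ^ 2 + ‖q‖ ^ 2 = 1)
    (hb : aS ^ 2 + ‖bS‖ ^ 2 = 1) (hw : bS * q ≠ 0) (hlam : lam ≠ 0)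
    (h : IsEigPair (Tmat γ p aS q bS lam) z₁ z₂) :
    ‖z₁‖ = ‖z₂‖ ↔ ∃ r : ℝ, lam + lam⁻¹ = r ∧
      (r - 2 * p * aS * Real.cosh (2 * γ)) ^ 2 - 4 * ‖bS * q‖ ^ 2 ≤ 0 := by
  set c := 2 * p * aS * Real.cosh (2 * γ)
  obtain ⟨hsum, hprod⟩ := isEigPair_iff.1 h
  have hnorm : ‖z₁‖ = ‖z₂‖ ↔ ‖bS * q * z₁‖ = ‖bS * q * z₂‖ := by
    rw [norm_mul _ z₁, norm_mul _ z₂, mul_right_inj' (norm_ne_zero_iff.2 hw)]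
  have hprod' : bS * q * z₁ * (bS * q * z₂) = (‖bS * q‖ : ℂ) ^ 2 := by
    rw [← sq_mul_det_Tmat (γ := γ) (aS := aS) hq hlam, ← hprod]; ring
  rw [hnorm, Complex.norm_eq_norm_iff_of_mul_eq_sq hprod', ← mul_add, hsum,
    mul_trace_Tmat hb hw hlam]
  constructor
  · rintro ⟨r, hr, hle⟩
    exact ⟨r + c, by rw [Complex.ofReal_add, ← hr]; ring, by linarith⟩
  · rintro ⟨r, hr, hle⟩
    exact ⟨r - c, by rw [hr, Complex.ofReal_sub], by linarith⟩

lemma exists_isEigPair_Tmat_norm_eq_iff (hq : p ^ 2 + ‖q‖ ^ 2 = 1)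
    (hb : aS ^ 2 + ‖bS‖ ^ 2 = 1) (hw : bS * q ≠ 0) (hlam : lam ≠ 0) :
    (∃ z₁ z₂, IsEigPair (Tmat γ p aS q bS lam) z₁ z₂ ∧ ‖z₁‖ = ‖z₂‖) ↔
      ∃ r : ℝ, lam + lam⁻¹ = r ∧
        (r - 2 * p * aS * Real.cosh (2 * γ)) ^ 2 - 4 * ‖bS * q‖ ^ 2 ≤ 0 := by
  constructor
  · rintro ⟨z₁, z₂, h, hnorm⟩
    exact (h.norm_eq_norm_iff_of_Tmat hq hb hw hlam).1 hnorm
  · intro hr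
    obtain ⟨z₁, z₂, h⟩ := exists_isEigPair (Tmat γ p aS q bS lam)
    exact ⟨z₁, z₂, h, (h.norm_eq_norm_iff_of_Tmat hq hb hw hlam).2 hr⟩

end Tmat

lemma ne_zero_of_sq_add_norm_sq_eq_one {a : ℝ} {b : ℂ} (ha : a ∈ Set.Ioo (-1 : ℝ) 1)
    (h : a ^ 2 + ‖b‖ ^ 2 = 1) : b ≠ 0 := by
  rintro rfl
  rw [norm_zero] at h
  nlinarith [ha.1, ha.2]

/-- The eigenvalues of `T_*` have equal absolute value iff `λ + λ⁻¹` is real and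
`(λ + λ⁻¹ − 2 p a_* cosh(2γ))² − 4|b_* q|² ≤ 0`; consequently the characterisation of `λ ∉ Λ`. -/
theorem not_mem_Lambda_iff (γ p : ℝ) (hp : p ∈ Set.Ioo (-1 : ℝ) 1) (q : ℂ)
    (hq : p ^ 2 + ‖q‖ ^ 2 = 1)
    (aP aM : ℝ) (haP : aP ∈ Set.Ioo (-1 : ℝ) 1) (haM : aM ∈ Set.Ioo (-1 : ℝ) 1)
    (bP bM : ℂ) (hbP : aP ^ 2 + ‖bP‖ ^ 2 = 1) (hbM : aM ^ 2 + ‖bM‖ ^ 2 = 1) (lam : ℂ) (hlam : lam ≠ 0) :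
    (∀ aS : ℝ, ∀ bS : ℂ, ((aS, bS) = (aP, bP) ∨ (aS, bS) = (aM, bM)) →
      ((∃ z₁ z₂ : ℂ, IsEigPair (Tmat γ p aS q bS lam) z₁ z₂ ∧
          ‖z₁‖ = ‖z₂‖) ↔
        ∃ r : ℝ, lam + lam⁻¹ = (r : ℂ) ∧
          (r - 2 * p * aS * Real.cosh (2 * γ)) ^ 2 - 4 * ‖bS * q‖ ^ 2 ≤ 0)) ∧
    (lam ∉ LamSet γ p aP aM q bP bM ↔
      ∃ aS : ℝ, ∃ bS : ℂ, ((aS, bS) = (aP, bP) ∨ (aS, bS) = (aM, bM)) ∧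
        ∃ r : ℝ, lam + lam⁻¹ = (r : ℂ) ∧
          (r - 2 * p * aS * Real.cosh (2 * γ)) ^ 2 - 4 * ‖bS * q‖ ^ 2 ≤ 0) := by
  have hq0 := ne_zero_of_sq_add_norm_sq_eq_one hp hq
  have hP := exists_isEigPair_Tmat_norm_eq_iff (γ := γ) hq hbP
    (mul_ne_zero (ne_zero_of_sq_add_norm_sq_eq_one haP hbP) hq0) hlam
  have hM := exists_isEigPair_Tmat_norm_eq_iff (γ := γ) hq hbM
    (mul_ne_zero (ne_zero_of_sq_add_norm_sq_eq_one haM hbM) hq0) hlam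
  refine ⟨?_, ?_⟩
  · rintro aS bS (h | h) <;> obtain ⟨rfl, rfl⟩ := Prod.mk.inj h
    exacts [hP, hM]
  · simp only [Prod.mk.injEq, or_and_right, exists_or, and_assoc, exists_and_left,
      exists_eq_left]
    rw [← hP, ← hM]
    simp only [LamSet, Set.mem_ofPred_eq, exists_isEigPair_norm_ne_iff, ne_eq, hlam,
      not_false_eq_true, true_and, not_and_or, not_not]
end
end

section
/- Let d > 0 be a real number and let X, w ∈ ℂ satisfy w² = X² − 4d². Then |X + w|² = 4d² and |X − w|² = 4d² hold simultaneously if and only if X is real and X² − 4d² ≤ 0. -/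
/-!
Put `u = X + w` and `v = X - w`, so that `u * v = X² - w² = 4d²` is real. For such a pair,
`‖u‖² = ‖v‖² = 4d²` says exactly that `v = conj u`, i.e. that `X = (u + v) / 2` is real and
`w = (u - v) / 2` is purely imaginary. Finally, for real `X`, the number `w` with
`w² = X² - 4d²` is purely imaginary exactly when `X² - 4d² ≤ 0`.
-/

noncomputable section
open Complex Matrix

namespace Complex

open ComplexConjugate

theorem sq_norm_eq_and_sq_norm_eq_iff_eq_conj {u v : ℂ} {c : ℝ} (h : u * v = c) :
    ‖u‖ ^ 2 = c ∧ ‖v‖ ^ 2 = c ↔ v = conj u := by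
  constructor
  · rintro ⟨hu, hv⟩
    by_cases hu0 : u = 0
    · subst hu0
      have hc : c = 0 := by simpa using hu.symm
      simpa [hc] using hv
    · apply mul_left_cancel₀ hu0
      rw [h, mul_conj', ← hu, ofReal_pow]
  · rintro rfl
    have hu : ‖u‖ ^ 2 = c := ofReal_injective (by rw [ofReal_pow, ← mul_conj', h])
    exact ⟨hu, by rw [norm_conj, hu]⟩

theorem sub_eq_conj_add_iff (X w : ℂ) : X - w = conj (X + w) ↔ X.im = 0 ∧ w.re = 0 := by
  simp only [Complex.ext_iff, sub_re, sub_im, map_add, add_re, add_im, conj_re, conj_im]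
  constructor <;> rintro ⟨h₁, h₂⟩ <;> constructor <;> linarith

theorem re_eq_zero_iff_of_sq_eq_ofReal {w : ℂ} {s : ℝ} (h : w ^ 2 = s) : w.re = 0 ↔ s ≤ 0 := by
  have hre : w.re ^ 2 - w.im ^ 2 = s := by simpa [sq] using congrArg re h
  have him : w.re * w.im = 0 := by
    have := congrArg im h
    simp only [sq, mul_im, ofReal_im] at this
    linarith
  constructor
  · intro hw
    nlinarith [sq_nonneg w.im]
  · intro hs
    -- `re⁴ ≤ re² im² = 0`
    have : w.re ^ 4 ≤ 0 := by nlinarith [sq_nonneg w.re]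
    exact pow_eq_zero_iff (n := 4) (by norm_num) |>.mp (le_antisymm this (by positivity))

end Complex

theorem abs_eq_iff_real_and_nonpos_general (d : ℝ) (X w : ℂ)
    (hw : w ^ 2 = X ^ 2 - 4 * (d : ℂ) ^ 2) :
    (‖X + w‖ ^ 2 = 4 * d ^ 2 ∧ ‖X - w‖ ^ 2 = 4 * d ^ 2) ↔
      ∃ r : ℝ, X = (r : ℂ) ∧ r ^ 2 - 4 * d ^ 2 ≤ 0 := by
  have hprod : (X + w) * (X - w) = ((4 * d ^ 2 : ℝ) : ℂ) := by
    push_cast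
    linear_combination -hw
  rw [sq_norm_eq_and_sq_norm_eq_iff_eq_conj hprod, sub_eq_conj_add_iff]
  constructor
  · rintro ⟨hX, hw0⟩
    have hXr : X = (X.re : ℂ) := Complex.ext rfl (by simpa using hX)
    rw [hXr] at hw
    refine ⟨X.re, hXr, (re_eq_zero_iff_of_sq_eq_ofReal (s := X.re ^ 2 - 4 * d ^ 2) ?_).mp hw0⟩
    rw [hw]
    push_cast
    ring
  · rintro ⟨r, rfl, hr⟩
    refine ⟨ofReal_im r, (re_eq_zero_iff_of_sq_eq_ofReal (s := r ^ 2 - 4 * d ^ 2) ?_).mpr hr⟩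
    rw [hw]
    push_cast
    ring

/-- For `d > 0` and `w² = X² − 4d²`: `|X + w|² = 4d²` and `|X − w|² = 4d²` hold simultaneously
iff `X` is real and `X² − 4d² ≤ 0`. -/
theorem abs_eq_iff_real_and_nonpos (d : ℝ) (hd : 0 < d) (X w : ℂ)
    (hw : w ^ 2 = X ^ 2 - 4 * (d : ℂ) ^ 2) :
    (‖X + w‖ ^ 2 = 4 * d ^ 2 ∧ ‖X - w‖ ^ 2 = 4 * d ^ 2) ↔
      ∃ r : ℝ, X = (r : ℂ) ∧ r ^ 2 - 4 * d ^ 2 ≤ 0 :=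
  abs_eq_iff_real_and_nonpos_general d X w hw
end
end

section
/- Let (s₁, s₂) ∈ {−1, +1}² and set λ = λ(s₁, s₂). Then for each * ∈ {p, m}, (λ + λ⁻¹ − 2 p a_* cosh(2γ))² − 4 |b_* q|² = 4 (p cosh(2γ) − s₂ a_* √(1 + p² sinh²(2γ)))². Consequently, if p cosh(2γ)/|q| ≠ s₂ a_*/|b_*| for each * ∈ {p, m}, then λ(s₁, s₂) ∈ Λ. -/
/-!
Using `a_*² + ‖b_*‖² = 1`, `p² + ‖q‖² = 1` and `2 cosh 2γ = e^{2γ} + e^{-2γ}`, the matrix `T_*`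
has trace `t / u` and determinant `‖u‖² / u²`, where `u = b_* q` and
`t = λ + λ⁻¹ - 2 p a_* cosh 2γ`. For real `λ` its eigenvalues are therefore `w / u` with `w` the
real roots of `w² - t w + ‖u‖²`; when `t² > 4‖u‖²` these are distinct with positive product, so
they have distinct absolute values.

At `λ = λ(s₁, s₂)` one has `λ⁻¹ = s₂ R - s₁ p sinh 2γ` with `R = √(1 + p² sinh² 2γ)`, so
`λ + λ⁻¹ = 2 s₂ R`, and `R² - p² cosh² 2γ = 1 - p²` turns `t² - 4‖u‖²` into the square
`4 (p cosh 2γ - s₂ a_* R)²`. It vanishes only if `R ‖b_*‖ = ‖q‖`, i.e. only if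
`p cosh 2γ / ‖q‖ = s₂ a_* / ‖b_*‖`.
-/

noncomputable section
open Complex Matrix

/-- `λ(s₁, s₂) = s₁ p sinh(2γ) + s₂ √(1 + p² sinh²(2γ))`. -/
def lamSS (γ p s₁ s₂ : ℝ) : ℝ :=
  s₁ * p * Real.sinh (2 * γ) + s₂ * Real.sqrt (1 + p ^ 2 * Real.sinh (2 * γ) ^ 2)

theorem isEigPair_of_trace_det {A : Matrix (Fin 2) (Fin 2) ℂ} {z₁ z₂ : ℂ}
    (htr : A.trace = z₁ + z₂) (hdet : A.det = z₁ * z₂) : IsEigPair A z₁ z₂ := by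
  rw [IsEigPair, A.charpoly_fin_two, htr, hdet]
  simp only [map_add, map_mul]
  ring

theorem exists_add_eq_mul_eq_abs_ne {t m : ℝ} (h : 4 * m ^ 2 < t ^ 2) :
    ∃ w₁ w₂ : ℝ, w₁ + w₂ = t ∧ w₁ * w₂ = m ^ 2 ∧ |w₁| ≠ |w₂| := by
  set s := √(t ^ 2 - 4 * m ^ 2)
  have hs : 0 < s := Real.sqrt_pos.mpr (by linarith)
  have hs2 : s ^ 2 = t ^ 2 - 4 * m ^ 2 := Real.sq_sqrt (by linarith)
  have ht : t ≠ 0 := by rintro rfl; nlinarith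
  refine ⟨(t + s) / 2, (t - s) / 2, by ring, by linear_combination (-1 / 4 : ℝ) * hs2, ?_⟩
  intro habs
  have hsq : ((t + s) / 2) ^ 2 = ((t - s) / 2) ^ 2 := by rw [← sq_abs, habs, sq_abs]
  exact mul_ne_zero ht hs.ne' (by linear_combination hsq)

theorem exists_isEigPair_norm_ne {A : Matrix (Fin 2) (Fin 2) ℂ} {u : ℂ} (hu : u ≠ 0) {t : ℝ}
    (hdisc : 4 * ‖u‖ ^ 2 < t ^ 2) (htr : A.trace = t / u) (hdet : A.det = ‖u‖ ^ 2 / u ^ 2) :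
    ∃ z₁ z₂ : ℂ, IsEigPair A z₁ z₂ ∧ ‖z₁‖ ≠ ‖z₂‖ := by
  obtain ⟨w₁, w₂, hsum, hprod, hne⟩ := exists_add_eq_mul_eq_abs_ne hdisc
  refine ⟨w₁ / u, w₂ / u, isEigPair_of_trace_det ?_ ?_, ?_⟩
  · rw [htr, ← hsum]; push_cast; ring
  · rw [hdet, div_mul_div_comm, ← sq, ← ofReal_mul, hprod]; push_cast; rfl
  · simpa [norm_div, (norm_pos_iff.mpr hu).ne'] using hne

section Tmat

variable (γ p aS : ℝ) (q bS : ℂ) {lam : ℂ}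

theorem Tmat_trace (hb : aS ^ 2 + ‖bS‖ ^ 2 = 1) (hlam : lam ≠ 0) :
    (Tmat γ p aS q bS lam).trace = (lam + lam⁻¹ - 2 * p * aS * Real.cosh (2 * γ)) / (bS * q) := by
  rcases eq_or_ne (bS * q) 0 with hu | hu
  · simp [Tmat, hu] -- both sides vanish, as `1 / 0 = 0`
  obtain ⟨hb0, hq0⟩ := mul_ne_zero_iff.mp hu
  have hbC : (aS : ℂ) ^ 2 + (‖bS‖ : ℂ) ^ 2 = 1 := by exact_mod_cast hb
  rw [Tmat, trace_smul, trace_fin_two_of, smul_eq_mul]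
  field_simp
  linear_combination hbC

theorem Tmat_det (hq : p ^ 2 + ‖q‖ ^ 2 = 1) (hlam : lam ≠ 0) :
    (Tmat γ p aS q bS lam).det = ‖bS * q‖ ^ 2 / (bS * q) ^ 2 := by
  rcases eq_or_ne (bS * q) 0 with hu | hu
  · simp [Tmat, hu]
  obtain ⟨hb0, hq0⟩ := mul_ne_zero_iff.mp hu
  have hqC : (p : ℂ) ^ 2 + (‖q‖ : ℂ) ^ 2 = 1 := by exact_mod_cast hq
  have hbb : starRingEnd ℂ bS * bS = (‖bS‖ : ℂ) ^ 2 := by rw [mul_comm, mul_conj']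
  have hexp : (Real.exp (2 * γ) : ℂ) * (Real.exp (-(2 * γ)) : ℂ) = 1 := by
    rw [← ofReal_mul, ← Real.exp_add]; simp
  have hcosh : (Real.cosh (2 * γ) : ℂ) =
      ((Real.exp (2 * γ) : ℂ) + (Real.exp (-(2 * γ)) : ℂ)) / 2 := by
    rw [Real.cosh_eq]; push_cast; ring
  rw [Tmat, det_smul, det_fin_two_of, Fintype.card_fin, norm_mul, ofReal_mul, hcosh]
  field_simp
  linear_combination
    (lam * aS * p * (Real.exp (2 * γ) + Real.exp (-(2 * γ)) : ℂ) - lam ^ 2 * p ^ 2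
        - aS ^ 2 * Real.exp (2 * γ) * Real.exp (-(2 * γ))) * hbb
      - lam ^ 2 * ‖bS‖ ^ 2 * hqC - aS ^ 2 * ‖bS‖ ^ 2 * hexp

end Tmat

theorem norm_pos_of_sq_add_norm_sq_eq_one {E : Type*} [NormedAddCommGroup E] {a : ℝ} {z : E}
    (ha : a ∈ Set.Ioo (-1 : ℝ) 1) (h : a ^ 2 + ‖z‖ ^ 2 = 1) : 0 < ‖z‖ := by
  nlinarith [ha.1, ha.2, norm_nonneg z]

section lamSS

variable (γ p : ℝ) {s₁ s₂ : ℝ}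

theorem lamSS_mul_eq_one (hs₁ : s₁ ^ 2 = 1) (hs₂ : s₂ ^ 2 = 1) :
    lamSS γ p s₁ s₂ * (s₂ * √(1 + p ^ 2 * Real.sinh (2 * γ) ^ 2) - s₁ * p * Real.sinh (2 * γ)) =
      1 := by
  have hR : √(1 + p ^ 2 * Real.sinh (2 * γ) ^ 2) ^ 2 = 1 + p ^ 2 * Real.sinh (2 * γ) ^ 2 :=
    Real.sq_sqrt (by positivity)
  rw [lamSS]
  linear_combination √(1 + p ^ 2 * Real.sinh (2 * γ) ^ 2) ^ 2 * hs₂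
    - p ^ 2 * Real.sinh (2 * γ) ^ 2 * hs₁ + hR

theorem lamSS_ne_zero (hs₁ : s₁ ^ 2 = 1) (hs₂ : s₂ ^ 2 = 1) : lamSS γ p s₁ s₂ ≠ 0 :=
  left_ne_zero_of_mul_eq_one (lamSS_mul_eq_one γ p hs₁ hs₂)

theorem lamSS_add_inv (hs₁ : s₁ ^ 2 = 1) (hs₂ : s₂ ^ 2 = 1) :
    lamSS γ p s₁ s₂ + (lamSS γ p s₁ s₂)⁻¹ = 2 * s₂ * √(1 + p ^ 2 * Real.sinh (2 * γ) ^ 2) := by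
  rw [inv_eq_of_mul_eq_one_right (lamSS_mul_eq_one γ p hs₁ hs₂), lamSS]
  ring

theorem lamSS_discr (hs₁ : s₁ ^ 2 = 1) (hs₂ : s₂ ^ 2 = 1) {aS : ℝ} {q bS : ℂ}
    (hq : p ^ 2 + ‖q‖ ^ 2 = 1) (hb : aS ^ 2 + ‖bS‖ ^ 2 = 1) :
    (lamSS γ p s₁ s₂ + (lamSS γ p s₁ s₂)⁻¹ - 2 * p * aS * Real.cosh (2 * γ)) ^ 2 -
        4 * ‖bS * q‖ ^ 2 =
      4 * (p * Real.cosh (2 * γ) - s₂ * aS * √(1 + p ^ 2 * Real.sinh (2 * γ) ^ 2)) ^ 2 := by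
  have hR : √(1 + p ^ 2 * Real.sinh (2 * γ) ^ 2) ^ 2 = 1 + p ^ 2 * Real.sinh (2 * γ) ^ 2 :=
    Real.sq_sqrt (by positivity)
  rw [lamSS_add_inv γ p hs₁ hs₂, norm_mul]
  linear_combination 4 * √(1 + p ^ 2 * Real.sinh (2 * γ) ^ 2) ^ 2 * (1 - aS ^ 2) * hs₂
    + 4 * (1 - aS ^ 2) * hR - 4 * p ^ 2 * (1 - aS ^ 2) * Real.cosh_sq (2 * γ)
    - 4 * (1 - p ^ 2) * hb - 4 * ‖bS‖ ^ 2 * hq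

theorem p_mul_cosh_ne_of_div_ne (hs₂ : s₂ ^ 2 = 1) {aS Q B : ℝ} (hQ : 0 < Q) (hB : 0 < B)
    (hq : p ^ 2 + Q ^ 2 = 1) (hb : aS ^ 2 + B ^ 2 = 1)
    (h : p * Real.cosh (2 * γ) / Q ≠ s₂ * aS / B) :
    p * Real.cosh (2 * γ) ≠ s₂ * aS * √(1 + p ^ 2 * Real.sinh (2 * γ) ^ 2) := by
  set R := √(1 + p ^ 2 * Real.sinh (2 * γ) ^ 2)
  have hR : R ^ 2 = 1 + p ^ 2 * Real.sinh (2 * γ) ^ 2 := Real.sq_sqrt (by positivity)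
  intro heq
  have hRB : (R * B) ^ 2 = Q ^ 2 := by
    linear_combination R ^ 2 * hb + aS ^ 2 * R ^ 2 * hs₂
      + (p * Real.cosh (2 * γ) + s₂ * aS * R) * heq + hR - hq - p ^ 2 * Real.cosh_sq (2 * γ)
  have hRB' : R * B = Q := (pow_left_inj₀ (by positivity) hQ.le two_ne_zero).mp hRB
  apply h
  rw [div_eq_div_iff hQ.ne' hB.ne', heq, ← hRB']
  ring

theorem exists_isEigPair_Tmat_lamSS (hs₁ : s₁ ^ 2 = 1) (hs₂ : s₂ ^ 2 = 1) {aS : ℝ} {q bS : ℂ}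
    (hp : p ∈ Set.Ioo (-1 : ℝ) 1) (hq : p ^ 2 + ‖q‖ ^ 2 = 1)
    (ha : aS ∈ Set.Ioo (-1 : ℝ) 1) (hb : aS ^ 2 + ‖bS‖ ^ 2 = 1)
    (h : p * Real.cosh (2 * γ) / ‖q‖ ≠ s₂ * aS / ‖bS‖) :
    ∃ z₁ z₂ : ℂ, IsEigPair (Tmat γ p aS q bS (lamSS γ p s₁ s₂)) z₁ z₂ ∧ ‖z₁‖ ≠ ‖z₂‖ := by
  have hQ := norm_pos_of_sq_add_norm_sq_eq_one hp hq
  have hB := norm_pos_of_sq_add_norm_sq_eq_one ha hb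
  have hlam : (lamSS γ p s₁ s₂ : ℂ) ≠ 0 := ofReal_ne_zero.mpr (lamSS_ne_zero γ p hs₁ hs₂)
  refine exists_isEigPair_norm_ne (mul_ne_zero (norm_pos_iff.mp hB) (norm_pos_iff.mp hQ))
    (t := lamSS γ p s₁ s₂ + (lamSS γ p s₁ s₂)⁻¹ - 2 * p * aS * Real.cosh (2 * γ)) ?_ ?_
    (Tmat_det γ p aS q bS hq hlam)
  · have hne := sub_ne_zero.mpr (p_mul_cosh_ne_of_div_ne γ p hs₂ hQ hB hq hb h)
    have hpos : 0 < 4 * (p * Real.cosh (2 * γ) -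
        s₂ * aS * √(1 + p ^ 2 * Real.sinh (2 * γ) ^ 2)) ^ 2 := by positivity
    linarith [lamSS_discr γ p hs₁ hs₂ hq hb]
  · rw [Tmat_trace γ p aS q bS hb hlam]
    push_cast
    rfl

end lamSS

/-- The discriminant at `λ(s₁, s₂)` and membership `λ(s₁, s₂) ∈ Λ`. -/
theorem lamSS_mem_Lambda (γ p : ℝ) (hp : p ∈ Set.Ioo (-1 : ℝ) 1) (q : ℂ)
    (hq : p ^ 2 + ‖q‖ ^ 2 = 1)
    (aP aM : ℝ) (haP : aP ∈ Set.Ioo (-1 : ℝ) 1) (haM : aM ∈ Set.Ioo (-1 : ℝ) 1)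
    (bP bM : ℂ) (hbP : aP ^ 2 + ‖bP‖ ^ 2 = 1) (hbM : aM ^ 2 + ‖bM‖ ^ 2 = 1) (s₁ s₂ : ℝ)
    (hs₁ : s₁ = 1 ∨ s₁ = -1) (hs₂ : s₂ = 1 ∨ s₂ = -1) :
    (∀ aS : ℝ, ∀ bS : ℂ, ((aS, bS) = (aP, bP) ∨ (aS, bS) = (aM, bM)) →
      (lamSS γ p s₁ s₂ + (lamSS γ p s₁ s₂)⁻¹ - 2 * p * aS * Real.cosh (2 * γ)) ^ 2 -
          4 * ‖bS * q‖ ^ 2 =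
        4 * (p * Real.cosh (2 * γ) -
          s₂ * aS * Real.sqrt (1 + p ^ 2 * Real.sinh (2 * γ) ^ 2)) ^ 2) ∧
    ((∀ aS : ℝ, ∀ bS : ℂ, ((aS, bS) = (aP, bP) ∨ (aS, bS) = (aM, bM)) →
        p * Real.cosh (2 * γ) / ‖q‖ ≠ s₂ * aS / ‖bS‖) →
      ((lamSS γ p s₁ s₂ : ℝ) : ℂ) ∈ LamSet γ p aP aM q bP bM) := by
  have hs₁' : s₁ ^ 2 = 1 := by rcases hs₁ with rfl | rfl <;> norm_num
  have hs₂' : s₂ ^ 2 = 1 := by rcases hs₂ with rfl | rfl <;> norm_num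
  refine ⟨?_, fun hne => ⟨ofReal_ne_zero.mpr (lamSS_ne_zero γ p hs₁' hs₂'),
    exists_isEigPair_Tmat_lamSS γ p hs₁' hs₂' hp hq haP hbP (hne aP bP (.inl rfl)),
    exists_isEigPair_Tmat_lamSS γ p hs₁' hs₂' hp hq haM hbM (hne aM bM (.inr rfl))⟩⟩
  rintro aS bS (h | h) <;> obtain ⟨rfl, rfl⟩ := Prod.mk.inj h
  exacts [lamSS_discr γ p hs₁' hs₂' hq hbP, lamSS_discr γ p hs₁' hs₂' hq hbM]
end
end

section
/- Let s₂ ∈ {−1, +1} and * ∈ {p, m}, and set s_*' = sgn(p cosh(2γ) − s₂ a_* √(1 + p² sinh²(2γ))). Then s_*' = +1 if and only if p cosh(2γ)/|q| > s₂ a_*/|b_*|, and s_*' = −1 if and only if p cosh(2γ)/|q| < s₂ a_*/|b_*|. -/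
/-!
Put `t = p cosh 2γ`. Since `p² + |q|² = 1` the radicand is `t² + |q|²`, and since
`a_*² + |b_*|² = 1` the sign of `t - s₂ a_* √(t² + |q|²)` is that of
`t / √(t² + |q|²) - s₂ a_* / √(a_*² + |b_*|²)`. For `y > 0`, `x / √(x² + y²) = tanh (arsinh (x / y))`
is strictly increasing in the slope `x / y`.
-/

open Set

namespace Real

theorem sign_eq_one_iff {x : ℝ} : sign x = 1 ↔ 0 < x := by
  refine ⟨fun h => ?_, sign_of_pos⟩
  rcases lt_trichotomy x 0 with hx | rfl | hx
  · norm_num [sign_of_neg hx] at h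
  · norm_num at h
  · exact hx

theorem sign_eq_neg_one_iff {x : ℝ} : sign x = -1 ↔ x < 0 := by
  refine ⟨fun h => ?_, sign_of_neg⟩
  rcases lt_trichotomy x 0 with hx | rfl | hx
  · exact hx
  · norm_num at h
  · norm_num [sign_of_pos hx] at h

theorem tanh_strictMono : StrictMono tanh := fun x y hxy => by
  have hmem (z : ℝ) : tanh z ∈ Ioo (-1) 1 := ⟨neg_one_lt_tanh z, tanh_lt_one z⟩
  rwa [← artanh_lt_artanh_iff (hmem x) (hmem y), artanh_tanh, artanh_tanh]

theorem tanh_arsinh_div {x y : ℝ} (hy : 0 < y) :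
    tanh (arsinh (x / y)) = x / √(x ^ 2 + y ^ 2) := by
  have hsqrt : √(1 + (x / y) ^ 2) = √(x ^ 2 + y ^ 2) / y := by
    have hrad : 1 + (x / y) ^ 2 = (x ^ 2 + y ^ 2) / y ^ 2 := by field_simp; ring
    rw [hrad, sqrt_div' _ (sq_nonneg y), sqrt_sq hy.le]
  rw [tanh_eq_sinh_div_cosh, sinh_arsinh, cosh_arsinh, hsqrt, div_div_div_cancel_right₀ hy.ne']

theorem div_sqrt_sq_add_sq_lt_iff {x y x' y' : ℝ} (hy : 0 < y) (hy' : 0 < y') :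
    x / √(x ^ 2 + y ^ 2) < x' / √(x' ^ 2 + y' ^ 2) ↔ x / y < x' / y' := by
  rw [← tanh_arsinh_div hy, ← tanh_arsinh_div hy', tanh_strictMono.lt_iff_lt,
    arsinh_strictMono.lt_iff_lt]

end Real

open Real

theorem pos_of_sq_add_sq_eq_one {a b : ℝ} (ha : a ∈ Ioo (-1) 1) (hb : 0 ≤ b)
    (h : a ^ 2 + b ^ 2 = 1) : 0 < b :=
  hb.lt_of_ne fun hb0 => by subst hb0; nlinarith [ha.1, ha.2]

section SlopeComparison

variable {t Q a b : ℝ} (hQ : 0 < Q) (hb : 0 < b) (hab : a ^ 2 + b ^ 2 = 1)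
include hQ hb hab

theorem sub_mul_sqrt_pos_iff : 0 < t - a * √(t ^ 2 + Q ^ 2) ↔ a / b < t / Q := by
  have hS : 0 < √(t ^ 2 + Q ^ 2) := sqrt_pos.2 (by positivity)
  rw [sub_pos, ← lt_div_iff₀ hS, ← div_sqrt_sq_add_sq_lt_iff hb hQ, hab, sqrt_one, div_one]

theorem sub_mul_sqrt_neg_iff : t - a * √(t ^ 2 + Q ^ 2) < 0 ↔ t / Q < a / b := by
  have hS : 0 < √(t ^ 2 + Q ^ 2) := sqrt_pos.2 (by positivity)
  rw [sub_neg, ← div_lt_iff₀ hS, ← div_sqrt_sq_add_sq_lt_iff hQ hb, hab, sqrt_one, div_one]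

end SlopeComparison

theorem one_add_sq_mul_sinh_sq {p Q : ℝ} (h : p ^ 2 + Q ^ 2 = 1) (x : ℝ) :
    1 + p ^ 2 * sinh x ^ 2 = (p * cosh x) ^ 2 + Q ^ 2 := by
  linear_combination p ^ 2 * (cosh_sq x).symm - h

/-- Characterisation of the sign `s_*'`. -/
theorem sign_sStarPrime (γ p : ℝ) (hp : p ∈ Set.Ioo (-1 : ℝ) 1) (q : ℂ)
    (hq : p ^ 2 + ‖q‖ ^ 2 = 1)
    (aP aM : ℝ) (haP : aP ∈ Set.Ioo (-1 : ℝ) 1) (haM : aM ∈ Set.Ioo (-1 : ℝ) 1)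
    (bP bM : ℂ) (hbP : aP ^ 2 + ‖bP‖ ^ 2 = 1) (hbM : aM ^ 2 + ‖bM‖ ^ 2 = 1) (s₂ : ℝ) (hs₂ : s₂ = 1 ∨ s₂ = -1) :
    ∀ aS : ℝ, ∀ bS : ℂ, ((aS, bS) = (aP, bP) ∨ (aS, bS) = (aM, bM)) →
      (Real.sign (p * Real.cosh (2 * γ) -
            s₂ * aS * Real.sqrt (1 + p ^ 2 * Real.sinh (2 * γ) ^ 2)) = 1 ↔
        p * Real.cosh (2 * γ) / ‖q‖ > s₂ * aS / ‖bS‖) ∧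
      (Real.sign (p * Real.cosh (2 * γ) -
            s₂ * aS * Real.sqrt (1 + p ^ 2 * Real.sinh (2 * γ) ^ 2)) = -1 ↔
        p * Real.cosh (2 * γ) / ‖q‖ < s₂ * aS / ‖bS‖) := by
  intro aS bS hS
  obtain ⟨haS, hbS⟩ : aS ∈ Ioo (-1 : ℝ) 1 ∧ aS ^ 2 + ‖bS‖ ^ 2 = 1 := by
    rcases hS with h | h <;> obtain ⟨rfl, rfl⟩ := Prod.mk.inj h
    exacts [⟨haP, hbP⟩, ⟨haM, hbM⟩]
  have hq0 : 0 < ‖q‖ := pos_of_sq_add_sq_eq_one hp (norm_nonneg q) hq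
  have hb0 : 0 < ‖bS‖ := pos_of_sq_add_sq_eq_one haS (norm_nonneg bS) hbS
  have hab : (s₂ * aS) ^ 2 + ‖bS‖ ^ 2 = 1 := by
    rcases hs₂ with rfl | rfl <;> simpa using hbS
  rw [one_add_sq_mul_sinh_sq hq, sign_eq_one_iff, sign_eq_neg_one_iff, gt_iff_lt]
  exact ⟨sub_mul_sqrt_pos_iff hq0 hb0 hab, sub_mul_sqrt_neg_iff hq0 hb0 hab⟩
end
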